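/- arXiv:0904.0430 — 3 statements merged into one kernel-verified Lean document; each statement's English description precedes it below -/
import Mathlib

section
/- Let X be a random vector in ℝ^d with E[X] = 0 whose distribution has Lebesgue density ρ(x) = φ_{0,Σ}(x) q(Tx), where φ_{0,Σ}(x) = (2π)^{-d/2} (det Σ)^{-1/2} exp(-xᵀΣ⁻¹x/2) is the centered Gaussian density with positive-definite covariance matrix Σ, q : ℝ^m → ℝ is smooth, and T ∈ ℝ^{m×d}. Let 𝓘 ⊆ ℝ^d be the subspace spanned by the rows of T. Suppose ψ : ℝ^d → ℝ is continuously differentiable (with ∇ψ(X) and Xψ(X) integrable) and define β(ψ) := E[∇ψ(X)] = ∫ ∇ψ(x) ρ(x) dx. Then there exists a vector β ∈ 𝓘 such that ‖β(ψ) − β‖₂ ≤ ‖Σ⁻¹ E[X ψ(X)]‖₂ = ‖Σ⁻¹ ∫ x ψ(x) ρ(x) dx‖₂. In particular, if E[X ψ(X)] = 0 then β(ψ) ∈ 𝓘. -/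
open MeasureTheory Matrix

/-- The Euclidean norm on ℝ^d. -/
noncomputable def euclNorm {d : ℕ} (x : Fin d → ℝ) : ℝ := Real.sqrt (∑ i, x i ^ 2)

/-- The density of the centered multivariate normal distribution N(0, S). -/
noncomputable def gaussDensity {d : ℕ} (S : Matrix (Fin d) (Fin d) ℝ)
    (x : Fin d → ℝ) : ℝ :=
  (2 * Real.pi) ^ (-(d : ℝ) / 2) * S.det ^ (-(1 : ℝ) / 2) *
    Real.exp (-(x ⬝ᵥ S⁻¹.mulVec x) / 2)

/-- The gradient of a function ψ : ℝ^d → ℝ. -/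
noncomputable def gradVec {d : ℕ} (ψ : (Fin d → ℝ) → ℝ) (x : Fin d → ℝ) : Fin d → ℝ :=
  fun i => fderiv ℝ ψ x (Pi.single i 1)


open Filter
open scoped NNReal ENNReal

lemma limAtTop_eq_zero {f : ℝ → ℝ} {L : ℝ} (hf : Integrable f)
    (h : Tendsto f atTop (nhds L)) : L = 0 := by
  by_contra hL
  have hmem : {y : ℝ | |L| / 2 < ‖y‖} ∈ nhds L := by
    refine (isOpen_lt continuous_const continuous_norm).mem_nhds ?_
    simp only [Set.mem_setOf_eq, Real.norm_eq_abs]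
    have : 0 < |L| := abs_pos.mpr hL
    linarith
  obtain ⟨N, hN⟩ := eventually_atTop.mp (h.eventually hmem)
  have hint : IntegrableOn (fun _ : ℝ => |L| / 2) (Set.Ici N) volume := by
    refine Integrable.mono' hf.norm.integrableOn aestronglyMeasurable_const ?_
    rw [ae_restrict_iff' measurableSet_Ici]
    refine ae_of_all _ fun x hx => ?_
    simpa [Real.norm_eq_abs, abs_of_nonneg (show (0:ℝ) ≤ |L|/2 by positivity)]
      using (hN x hx).le
  rcases integrable_const_iff.mp hint with h0 | hfin
  · exact hL (by simpa using h0)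
  · replace hfin := @measure_lt_top _ _ _ hfin Set.univ
    rw [Measure.restrict_apply_univ, Real.volume_Ici] at hfin
    exact (lt_irrefl _ hfin).elim

lemma limAtBot_eq_zero {f : ℝ → ℝ} {L : ℝ} (hf : Integrable f)
    (h : Tendsto f atBot (nhds L)) : L = 0 := by
  by_contra hL
  have hmem : {y : ℝ | |L| / 2 < ‖y‖} ∈ nhds L := by
    refine (isOpen_lt continuous_const continuous_norm).mem_nhds ?_
    simp only [Set.mem_setOf_eq, Real.norm_eq_abs]
    have : 0 < |L| := abs_pos.mpr hL
    linarith
  obtain ⟨N, hN⟩ := eventually_atBot.mp (h.eventually hmem)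
  have hint : IntegrableOn (fun _ : ℝ => |L| / 2) (Set.Iic N) volume := by
    refine Integrable.mono' hf.norm.integrableOn aestronglyMeasurable_const ?_
    rw [ae_restrict_iff' measurableSet_Iic]
    refine ae_of_all _ fun x hx => ?_
    simpa [Real.norm_eq_abs, abs_of_nonneg (show (0:ℝ) ≤ |L|/2 by positivity)]
      using (hN x hx).le
  rcases integrable_const_iff.mp hint with h0 | hfin
  · exact hL (by simpa using h0)
  · replace hfin := @measure_lt_top _ _ _ hfin Set.univ
    rw [Measure.restrict_apply_univ, Real.volume_Iic] at hfin
    exact (lt_irrefl _ hfin).elim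

lemma integral_deriv_eq_zero' {f f' : ℝ → ℝ} (hd : ∀ t, HasDerivAt f (f' t) t)
    (hf : Integrable f) (hf' : Integrable f') : ∫ t, f' t = 0 := by
  have hFTC : ∀ a b : ℝ, (∫ t in a..b, f' t) = f b - f a := fun a b =>
    intervalIntegral.integral_eq_sub_of_hasDerivAt (fun t _ => hd t) hf'.intervalIntegrable
  have h1 : Tendsto (fun b => ∫ t in (0:ℝ)..b, f' t) atTop
      (nhds (∫ t in Set.Ioi (0:ℝ), f' t)) :=
    intervalIntegral_tendsto_integral_Ioi 0 hf'.integrableOn tendsto_id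
  have h2 : Tendsto f atTop (nhds (f 0 + ∫ t in Set.Ioi (0:ℝ), f' t)) := by
    have := tendsto_const_nhds.add h1 (f := fun _ : ℝ => f 0)
    simpa [hFTC] using this
  have hL1 : f 0 + (∫ t in Set.Ioi (0:ℝ), f' t) = 0 := limAtTop_eq_zero hf h2
  have h3 : Tendsto (fun a => ∫ t in a..(0:ℝ), f' t) atBot
      (nhds (∫ t in Set.Iic (0:ℝ), f' t)) :=
    intervalIntegral_tendsto_integral_Iic 0 hf'.integrableOn tendsto_id
  have h4 : Tendsto f atBot (nhds (f 0 - ∫ t in Set.Iic (0:ℝ), f' t)) := by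
    have := tendsto_const_nhds.sub h3 (f := fun _ : ℝ => f 0)
    have heq : ∀ a : ℝ, f 0 - (∫ t in a..(0:ℝ), f' t) = f a := by
      intro a; rw [hFTC]; ring
    simpa [heq] using this
  have hL2 : f 0 - (∫ t in Set.Iic (0:ℝ), f' t) = 0 := limAtBot_eq_zero hf h4
  have hmain : Tendsto (fun i : ℝ => ∫ t in (-i)..i, f' t) atTop
      (nhds (∫ t, f' t)) :=
    intervalIntegral_tendsto_integral hf' tendsto_neg_atTop_atBot tendsto_id
  have hmain2 : Tendsto (fun i : ℝ => ∫ t in (-i)..i, f' t) atTop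
      (nhds ((f 0 + ∫ t in Set.Ioi (0:ℝ), f' t) - (f 0 - ∫ t in Set.Iic (0:ℝ), f' t))) := by
    have := h2.comp (tendsto_id (α := ℝ) (x := atTop)) |>.sub (h4.comp tendsto_neg_atTop_atBot)
    simpa [hFTC] using this
  have := tendsto_nhds_unique hmain hmain2
  rw [this, hL1, hL2, sub_zero]

open Matrix in
lemma integral_lineDeriv_eq_zero {d : ℕ} (v : Fin d → ℝ) (g g' : (Fin d → ℝ) → ℝ)
    (hgc : Continuous g) (hg'c : Continuous g')
    (hd : ∀ x t, HasDerivAt (fun s : ℝ => g (x + s • v)) (g' (x + t • v)) t)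
    (hg : Integrable g) (hg' : Integrable g') :
    ∫ x, g' x = 0 := by
  by_cases hv : v = 0
  · have hz : ∀ x, g' x = 0 := by
      intro x
      have h1 : HasDerivAt (fun _ : ℝ => g x) (g' x) 0 := by
        simpa [hv] using hd x 0
      exact (h1.unique (hasDerivAt_const 0 (g x)))
    simp [hz]
  · obtain ⟨j, hj⟩ : ∃ j, v j ≠ 0 := by
      by_contra h
      push_neg at h
      exact hv (funext h)
    obtain ⟨n, rfl⟩ : ∃ n, d = n + 1 := ⟨d - 1, by have := j.pos; omega⟩
    classical
    set M : Matrix (Fin (n+1)) (Fin (n+1)) ℝ := (1 : Matrix _ _ ℝ).updateCol j v with hM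
    have hdet : M.det = v j := by
      rw [hM, ← Matrix.cramer_apply, Matrix.cramer_one]
      rfl
    have hdet0 : M.det ≠ 0 := by rw [hdet]; exact hj
    set A : (Fin (n+1) → ℝ) → (Fin (n+1) → ℝ) := fun y => M.mulVec y with hA
    have hAcont : Continuous A := by
      refine continuous_pi fun i => ?_
      simp only [hA, Matrix.mulVec, dotProduct]
      exact continuous_finset_sum _ fun k _ => continuous_const.mul (continuous_apply k)
    have hAkey : ∀ (y : Fin (n+1) → ℝ) (t : ℝ),
        A (y + t • (Pi.single j 1 : Fin (n+1) → ℝ)) = A y + t • v := by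
      intro y t
      have hsing : M.mulVec (Pi.single j 1) = v := by
        ext i
        simp only [hM, Matrix.mulVec_single, mul_one]
        simp [Matrix.updateCol_apply]
      rw [hA]
      simp only [Matrix.mulVec_add, Matrix.mulVec_smul, hsing]
    -- change of variables
    have hmap : Measure.map A volume = ENNReal.ofReal |M.det|⁻¹ • volume := by
      have := Real.map_matrix_volume_pi_eq_smul_volume_pi (M := M) hdet0
      have hco : (Matrix.toLin' M : (Fin (n+1) → ℝ) → (Fin (n+1) → ℝ)) = A := by
        funext y; simp [hA, Matrix.toLin'_apply]
      rw [hco] at this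
      rwa [abs_inv] at this
    have hconst : (ENNReal.ofReal |M.det|⁻¹).toReal = |M.det|⁻¹ :=
      ENNReal.toReal_ofReal (by positivity)
    have hcomp : ∀ (h : (Fin (n+1) → ℝ) → ℝ), Continuous h → Integrable h volume →
        Integrable (fun y => h (A y)) volume ∧
          (∫ y, h (A y)) = |M.det|⁻¹ * ∫ x, h x := by
      intro h hc hint
      have h1 : Integrable h (Measure.map A volume) := by
        rw [hmap]
        exact hint.smul_measure (by simp)
      constructor
      · exact (integrable_map_measure hc.aestronglyMeasurable hAcont.aemeasurable).mp h1
      · rw [← integral_map hAcont.aemeasurable hc.aestronglyMeasurable, hmap,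
          integral_smul_measure, hconst, smul_eq_mul]
    obtain ⟨hgA, -⟩ := hcomp g hgc hg
    obtain ⟨hg'A, hg'eq⟩ := hcomp g' hg'c hg'
    -- it suffices to show the integral of g' ∘ A vanishes
    suffices hsuff : (∫ y, g' (A y)) = 0 by
      have h2 : |M.det|⁻¹ ≠ 0 := by
        simp only [ne_eq, inv_eq_zero, abs_eq_zero]
        exact hdet0
      have := hg'eq.symm.trans hsuff
      exact (mul_eq_zero.mp this).resolve_left h2 |>.symm ▸ rfl
    -- Fubini via piFinSuccAbove
    set e := MeasurableEquiv.piFinSuccAbove (fun _ : Fin (n+1) => ℝ) j with he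
    have hmp : MeasurePreserving e volume volume :=
      volume_preserving_piFinSuccAbove (fun _ : Fin (n+1) => ℝ) j
    have hesymm : ∀ (p : ℝ × (Fin n → ℝ)), e.symm p = Fin.insertNth j p.1 p.2 := by
      intro p; rfl
    have hins : ∀ (t : ℝ) (y : Fin n → ℝ),
        Fin.insertNth j t y = Fin.insertNth j 0 y + t • (Pi.single j 1 : Fin (n+1) → ℝ) := by
      intro t y
      ext i
      refine Fin.succAboveCases j ?_ ?_ i
      · simp
      · intro k
        simp [Fin.succAbove_ne j k, Pi.single_eq_of_ne (Fin.succAbove_ne j k)]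
    have hGint : Integrable (fun p : ℝ × (Fin n → ℝ) => g (A (e.symm p)))
        ((volume : Measure ℝ).prod (volume : Measure (Fin n → ℝ))) :=
      (MeasurePreserving.symm e hmp).integrable_comp_emb e.symm.measurableEmbedding |>.mpr hgA
    have hG'int : Integrable (fun p : ℝ × (Fin n → ℝ) => g' (A (e.symm p)))
        ((volume : Measure ℝ).prod (volume : Measure (Fin n → ℝ))) :=
      (MeasurePreserving.symm e hmp).integrable_comp_emb e.symm.measurableEmbedding |>.mpr hg'A
    have hstep : (∫ y, g' (A y)) =
        ∫ p : ℝ × (Fin n → ℝ), g' (A (e.symm p)) ∂((volume : Measure ℝ).prod volume) :=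
      ((MeasurePreserving.symm e hmp).integral_comp' (fun x => g' (A x))).symm
    rw [hstep, integral_prod_symm _ hG'int]
    have hae1 := hGint.prod_left_ae
    have hae2 := hG'int.prod_left_ae
    rw [← integral_zero (Fin n → ℝ) ℝ]
    refine integral_congr_ae ?_
    filter_upwards [hae1, hae2] with y hy1 hy2
    have hbase : ∀ t : ℝ, A (e.symm (t, y)) = A (e.symm (0, y)) + t • v := by
      intro t
      rw [hesymm, hesymm, hins t y]
      simpa using hAkey (Fin.insertNth j 0 y) t
    have hy1' : Integrable (fun t : ℝ => g (A (e.symm (0, y)) + t • v)) (volume : Measure ℝ) := by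
      refine hy1.congr (ae_of_all _ fun t => congrArg g (hbase t))
    have hy2' : Integrable (fun t : ℝ => g' (A (e.symm (0, y)) + t • v)) (volume : Measure ℝ) := by
      refine hy2.congr (ae_of_all _ fun t => congrArg g' (hbase t))
    have h1d : (∫ t, g' (A (e.symm (0, y)) + t • v)) = 0 :=
      integral_deriv_eq_zero' (fun t => hd (A (e.symm (0, y))) t) hy1' hy2'
    calc (∫ t, g' (A (e.symm (t, y)))) = ∫ t, g' (A (e.symm (0, y)) + t • v) := by
          exact integral_congr_ae (ae_of_all _ fun t => congrArg g' (hbase t))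
      _ = 0 := h1d


/-- under the model ρ(x) = φ_{0,Σ}(x) q(Tx) with E X = 0, for any
C¹ function ψ there is β ∈ 𝓘 = span(rows of T) with
‖E[∇ψ(X)] − β‖₂ ≤ ‖Σ⁻¹ E[Xψ(X)]‖₂; in particular E[Xψ(X)] = 0 implies
E[∇ψ(X)] ∈ 𝓘. -/
theorem stmt0 {d m : ℕ} {Ω : Type*} [MeasurableSpace Ω]
    (μ : Measure Ω) [IsProbabilityMeasure μ]
    (X : Ω → Fin d → ℝ) (hX : Measurable X)
    (S : Matrix (Fin d) (Fin d) ℝ) (hS : S.PosDef)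
    (T : Matrix (Fin m) (Fin d) ℝ)
    (q : (Fin m → ℝ) → ℝ) (hq : ContDiff ℝ (⊤ : ℕ∞) q)
    (hdens : Measure.map X μ = volume.withDensity
      (fun x => ENNReal.ofReal (gaussDensity S x * q (T.mulVec x))))
    (hmean : ∫ ω, X ω ∂μ = 0)
    (ψ : (Fin d → ℝ) → ℝ) (hψ : ContDiff ℝ 1 ψ)
    (hint1 : Integrable (fun ω => gradVec ψ (X ω)) μ)
    (hint2 : Integrable (fun ω => ψ (X ω) • X ω) μ)
    (I : Submodule ℝ (Fin d → ℝ)) (hI : I = Submodule.span ℝ (Set.range T)) :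
    (∃ β ∈ I, euclNorm ((∫ ω, gradVec ψ (X ω) ∂μ) - β) ≤
        euclNorm (S⁻¹.mulVec (∫ ω, ψ (X ω) • X ω ∂μ))) ∧
      ((∫ ω, ψ (X ω) • X ω ∂μ) = 0 → (∫ ω, gradVec ψ (X ω) ∂μ) ∈ I) := by
  classical
  set G := ∫ ω, gradVec ψ (X ω) ∂μ with hG
  set Mv := ∫ ω, ψ (X ω) • X ω ∂μ with hMv
  set K := G - S⁻¹.mulVec Mv with hK
  -- continuity facts
  have hψc : Continuous ψ := hψ.continuous
  have hfd : Continuous (fderiv ℝ ψ) := hψ.continuous_fderiv one_ne_zero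
  have hgradc : Continuous (gradVec ψ) := by
    refine continuous_pi fun i => ?_
    exact (ContinuousLinearMap.apply ℝ ℝ (Pi.single i 1 : Fin d → ℝ)).continuous.comp hfd
  have hquadc : Continuous fun x : Fin d → ℝ => x ⬝ᵥ S⁻¹.mulVec x := by
    simp only [dotProduct, Matrix.mulVec]
    exact continuous_finset_sum _ fun i _ => (continuous_apply i).mul
      (continuous_finset_sum _ fun k _ => continuous_const.mul (continuous_apply k))
  have hgausspos : ∀ x, 0 < gaussDensity S x := by
    intro x
    unfold gaussDensity
    have h1 : (0:ℝ) < (2 * Real.pi) ^ (-(d : ℝ) / 2) :=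
      Real.rpow_pos_of_pos (by positivity) _
    have h2 : (0:ℝ) < S.det ^ (-(1:ℝ) / 2) := Real.rpow_pos_of_pos hS.det_pos _
    positivity
  have hgcont : Continuous (gaussDensity S) := by
    unfold gaussDensity
    exact continuous_const.mul (Real.continuous_exp.comp ((hquadc.neg).div_const 2))
  have hTcont : Continuous fun x : Fin d → ℝ => T.mulVec x := by
    refine continuous_pi fun i => ?_
    simp only [Matrix.mulVec, dotProduct]
    exact continuous_finset_sum _ fun k _ => continuous_const.mul (continuous_apply k)
  set D : (Fin d → ℝ) → NNReal := fun x => Real.toNNReal (gaussDensity S x * q (T.mulVec x))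
    with hD
  have hDc : Continuous fun x => (D x : ℝ) := by
    simp only [hD, Real.coe_toNNReal']
    exact (hgcont.mul (hq.continuous.comp hTcont)).max continuous_const
  have hDmeas : Measurable D :=
    continuous_real_toNNReal.measurable.comp (hgcont.mul (hq.continuous.comp hTcont)).measurable
  have hdens' : Measure.map X μ = volume.withDensity (fun x => ((D x : ℝ≥0) : ℝ≥0∞)) := by
    rw [hdens]
    rfl
  -- transfers
  have h1 : Integrable (fun x => (D x : ℝ) • gradVec ψ x) volume := by
    have hA : Integrable (gradVec ψ) (Measure.map X μ) :=
      (integrable_map_measure hgradc.aestronglyMeasurable hX.aemeasurable).mpr hint1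
    rw [hdens'] at hA
    have hB := (integrable_withDensity_iff_integrable_smul hDmeas).mp hA
    simpa [NNReal.smul_def] using hB
  have hsx : Continuous fun x : Fin d → ℝ => ψ x • x := hψc.smul continuous_id
  have h2 : Integrable (fun x => (D x : ℝ) • (ψ x • x)) volume := by
    have hA : Integrable (fun x => ψ x • x) (Measure.map X μ) :=
      (integrable_map_measure hsx.aestronglyMeasurable hX.aemeasurable).mpr hint2
    rw [hdens'] at hA
    have hB := (integrable_withDensity_iff_integrable_smul hDmeas).mp hA
    simpa [NNReal.smul_def] using hB
  have hEG : G = ∫ x, (D x : ℝ) • gradVec ψ x := by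
    have e1 : G = ∫ x, gradVec ψ x ∂(Measure.map X μ) :=
      (integral_map hX.aemeasurable hgradc.aestronglyMeasurable).symm
    rw [e1, hdens', integral_withDensity_eq_integral_smul hDmeas]
    simp [NNReal.smul_def]
  have hEM : Mv = ∫ x, (D x : ℝ) • (ψ x • x) := by
    have e1 : Mv = ∫ x, ψ x • x ∂(Measure.map X μ) :=
      (integral_map hX.aemeasurable hsx.aestronglyMeasurable).symm
    rw [e1, hdens', integral_withDensity_eq_integral_smul hDmeas]
    simp [NNReal.smul_def]
  -- symmetry of S⁻¹
  have hsymm : Sᵀ = S := by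
    have h := hS.isHermitian
    rwa [Matrix.IsHermitian, Matrix.conjTranspose_eq_transpose_of_trivial] at h
  have hSi : S⁻¹ᵀ = S⁻¹ := by rw [Matrix.transpose_nonsing_inv, hsymm]
  have hentry : ∀ i k, S⁻¹ i k = S⁻¹ k i := by
    intro i k
    have := congrFun (congrFun hSi k) i
    simpa [Matrix.transpose_apply] using this
  have hdotsym : ∀ y z : Fin d → ℝ, y ⬝ᵥ S⁻¹.mulVec z = (S⁻¹.mulVec y) ⬝ᵥ z := by
    intro y z
    simp only [dotProduct, Matrix.mulVec, Finset.mul_sum, Finset.sum_mul]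
    rw [Finset.sum_comm]
    refine Finset.sum_congr rfl fun k _ => Finset.sum_congr rfl fun i _ => ?_
    first
    | (rw [hentry i k]; ring)
    | (rw [hentry k i]; ring)
  have hkey : ∀ v : Fin d → ℝ, T.mulVec v = 0 → v ⬝ᵥ G = v ⬝ᵥ S⁻¹.mulVec Mv := by
    intro v hv
    have hgradeq : ∀ x, fderiv ℝ ψ x v = ∑ i, v i * gradVec ψ x i := by
      intro x
      have hsingle : ∀ i : Fin d, (fun j => if i = j then (1:ℝ) else 0) =
          (Pi.single i 1 : Fin d → ℝ) := by
        intro i; funext j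
        by_cases h : i = j
        · subst h; simp
        · simp [Pi.single_apply, h, Ne.symm h]
      conv_lhs => rw [pi_eq_sum_univ v]
      rw [map_sum]
      refine Finset.sum_congr rfl fun i _ => ?_
      rw [_root_.map_smul, hsingle i]
      simp [gradVec, smul_eq_mul]
    set w : Fin d → ℝ := S⁻¹.mulVec v with hw
    have hvdot : ∀ y : Fin d → ℝ, v ⬝ᵥ S⁻¹.mulVec y = w ⬝ᵥ y := fun y => hdotsym v y
    set c : (Fin d → ℝ) → ℝ := fun x => max (q (T.mulVec x)) 0 with hc
    have hρeq : ∀ x, (D x : ℝ) = gaussDensity S x * c x := by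
      intro x
      simp only [hD, Real.coe_toNNReal', hc]
      rw [mul_max_of_nonneg _ _ (hgausspos x).le, mul_zero]
    set g : (Fin d → ℝ) → ℝ := fun x => ψ x * (D x : ℝ) with hgdef
    set g' : (Fin d → ℝ) → ℝ :=
      fun x => fderiv ℝ ψ x v * (D x : ℝ) - ψ x * ((v ⬝ᵥ S⁻¹.mulVec x) * (D x : ℝ)) with hg'def
    have hdervec : ∀ (x : Fin d → ℝ) (t : ℝ),
        HasDerivAt (fun s : ℝ => g (x + s • v)) (g' (x + t • v)) t := by
      intro x t
      have hline : HasDerivAt (fun s : ℝ => x + s • v) v t := by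
        simpa using ((hasDerivAt_id t).smul_const v).const_add x
      have hcconst : ∀ s : ℝ, c (x + s • v) = c x := by
        intro s
        simp only [hc]
        rw [Matrix.mulVec_add, Matrix.mulVec_smul, hv, smul_zero, add_zero]
      have hψline : HasDerivAt (fun s : ℝ => ψ (x + s • v)) (fderiv ℝ ψ (x + t • v) v) t :=
        ((hψ.differentiable one_ne_zero) (x + t • v)).hasFDerivAt.comp_hasDerivAt t hline
      have hQ : HasDerivAt (fun s : ℝ => (x + s • v) ⬝ᵥ S⁻¹.mulVec (x + s • v))
          (2 * (v ⬝ᵥ S⁻¹.mulVec (x + t • v))) t := by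
        have hfun : (fun s : ℝ => (x + s • v) ⬝ᵥ S⁻¹.mulVec (x + s • v)) =
            fun s => (x ⬝ᵥ S⁻¹.mulVec x) + (2 * (v ⬝ᵥ S⁻¹.mulVec x)) * s
              + (v ⬝ᵥ S⁻¹.mulVec v) * s ^ 2 := by
          funext s
          have hxv : x ⬝ᵥ S⁻¹.mulVec v = v ⬝ᵥ S⁻¹.mulVec x := by
            rw [hdotsym x v, dotProduct_comm]
          simp only [Matrix.mulVec_add, Matrix.mulVec_smul, dotProduct_add,
            add_dotProduct, dotProduct_smul, smul_dotProduct, smul_eq_mul]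
          rw [hxv]
          ring
        rw [hfun]
        have hpoly : HasDerivAt (fun s : ℝ => (x ⬝ᵥ S⁻¹.mulVec x)
            + (2 * (v ⬝ᵥ S⁻¹.mulVec x)) * s + (v ⬝ᵥ S⁻¹.mulVec v) * s ^ 2)
            ((2 * (v ⬝ᵥ S⁻¹.mulVec x)) * 1 + (v ⬝ᵥ S⁻¹.mulVec v) * (2 * t ^ 1)) t :=
          (((hasDerivAt_id t).const_mul _).const_add _).add ((hasDerivAt_pow 2 t).const_mul _)
        convert hpoly using 1
        simp only [Matrix.mulVec_add, Matrix.mulVec_smul, dotProduct_add,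
          dotProduct_smul, smul_eq_mul, pow_one]
        ring
      have hφline : HasDerivAt (fun s : ℝ => gaussDensity S (x + s • v))
          (-(v ⬝ᵥ S⁻¹.mulVec (x + t • v)) * gaussDensity S (x + t • v)) t := by
        have hexp : HasDerivAt
            (fun s : ℝ => Real.exp (-((x + s • v) ⬝ᵥ S⁻¹.mulVec (x + s • v)) / 2))
            (Real.exp (-((x + t • v) ⬝ᵥ S⁻¹.mulVec (x + t • v)) / 2)
              * (-(2 * (v ⬝ᵥ S⁻¹.mulVec (x + t • v))) / 2)) t := (hQ.neg.div_const 2).exp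
        have hmul := hexp.const_mul
          ((2 * Real.pi) ^ (-(d : ℝ) / 2) * S.det ^ (-(1 : ℝ) / 2))
        have hfunny : (fun s : ℝ => ((2 * Real.pi) ^ (-(d : ℝ) / 2) * S.det ^ (-(1 : ℝ) / 2))
            * Real.exp (-((x + s • v) ⬝ᵥ S⁻¹.mulVec (x + s • v)) / 2))
            = fun s : ℝ => gaussDensity S (x + s • v) := by
          funext s; rfl
        rw [hfunny] at hmul
        refine hmul.congr_deriv ?_
        unfold gaussDensity
        ring
      have hgline : (fun s : ℝ => g (x + s • v)) =
          fun s => (ψ (x + s • v) * gaussDensity S (x + s • v)) * c x := by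
        funext s
        simp only [hgdef]
        rw [hρeq, hcconst s]
        ring
      rw [hgline]
      have hprod := (hψline.mul hφline).mul_const (c x)
      refine hprod.congr_deriv ?_
      simp only [hg'def]
      rw [hρeq (x + t • v), ← hcconst t, hcconst t]
      ring
    -- integrability
    have hcomp1 : ∀ i : Fin d, Integrable (fun x => (D x : ℝ) * gradVec ψ x i) volume := by
      intro i
      have := (ContinuousLinearMap.proj (R := ℝ) (φ := fun _ : Fin d => ℝ) i).integrable_comp h1
      simpa using this
    have hcomp2 : ∀ i : Fin d, Integrable (fun x => (D x : ℝ) * (ψ x * x i)) volume := by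
      intro i
      have := (ContinuousLinearMap.proj (R := ℝ) (φ := fun _ : Fin d => ℝ) i).integrable_comp h2
      simpa [mul_assoc] using this
    have he1 : (fun x => fderiv ℝ ψ x v * (D x : ℝ)) =
        fun x => ∑ i, v i * ((D x : ℝ) * gradVec ψ x i) := by
      funext x
      rw [hgradeq x, Finset.sum_mul]
      exact Finset.sum_congr rfl fun i _ => by ring
    have he2 : (fun x => ψ x * ((v ⬝ᵥ S⁻¹.mulVec x) * (D x : ℝ))) =
        fun x => ∑ i, w i * ((D x : ℝ) * (ψ x * x i)) := by
      funext x
      rw [hvdot x]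
      simp only [dotProduct, Finset.sum_mul, Finset.mul_sum]
      exact Finset.sum_congr rfl fun i _ => by ring
    have hp1 : Integrable (fun x => fderiv ℝ ψ x v * (D x : ℝ)) volume := by
      rw [he1]
      exact integrable_finset_sum _ fun i _ => (hcomp1 i).const_mul (v i)
    have hp2 : Integrable (fun x => ψ x * ((v ⬝ᵥ S⁻¹.mulVec x) * (D x : ℝ))) volume := by
      rw [he2]
      exact integrable_finset_sum _ fun i _ => (hcomp2 i).const_mul (w i)
    have hg'int : Integrable g' volume := hp1.sub hp2
    have hgc : Continuous g := hψc.mul hDc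
    have hdotc : Continuous fun x : Fin d → ℝ => v ⬝ᵥ S⁻¹.mulVec x := by
      simp only [dotProduct, Matrix.mulVec]
      exact continuous_finset_sum _ fun i _ => continuous_const.mul
        (continuous_finset_sum _ fun k _ => continuous_const.mul (continuous_apply k))
    have hfdvc : Continuous fun x => fderiv ℝ ψ x v :=
      (ContinuousLinearMap.apply ℝ ℝ v).continuous.comp hfd
    have hg'c : Continuous g' := (hfdvc.mul hDc).sub (hψc.mul (hdotc.mul hDc))
    have hgint : Integrable g volume := by
      have hball : IntegrableOn g (Metric.closedBall (0 : Fin d → ℝ) 1) volume :=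
        hgc.continuousOn.integrableOn_compact (isCompact_closedBall 0 1)
      have hout : IntegrableOn g (Metric.closedBall (0 : Fin d → ℝ) 1)ᶜ volume := by
        refine Integrable.mono' h2.norm.integrableOn hgc.aestronglyMeasurable.restrict ?_
        rw [ae_restrict_iff' measurableSet_closedBall.compl]
        refine ae_of_all _ fun x hx => ?_
        have hxn : 1 ≤ ‖x‖ := by
          simp only [Set.mem_compl_iff, Metric.mem_closedBall, dist_zero_right, not_le] at hx
          exact hx.le
        have hDnn : (0:ℝ) ≤ (D x : ℝ) := (D x).2
        have hgx : ‖g x‖ = |ψ x| * (D x : ℝ) := by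
          simp only [hgdef, Real.norm_eq_abs, abs_mul]
          rw [abs_of_nonneg hDnn]
        rw [hgx]
        calc |ψ x| * (D x : ℝ) ≤ |ψ x| * (D x : ℝ) * ‖x‖ :=
              le_mul_of_one_le_right (by positivity) hxn
          _ = ‖(D x : ℝ) • (ψ x • x)‖ := by
              rw [norm_smul, norm_smul]
              simp only [Real.norm_eq_abs]
              rw [abs_of_nonneg hDnn]
              ring
      have hu := hball.union hout
      rw [Set.union_compl_self] at hu
      exact integrableOn_univ.mp hu
    have hzero : ∫ x, g' x = 0 :=
      integral_lineDeriv_eq_zero v g g' hgc hg'c hdervec hgint hg'int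
    have hsplit : (∫ x, fderiv ℝ ψ x v * (D x : ℝ)) =
        ∫ x, ψ x * ((v ⬝ᵥ S⁻¹.mulVec x) * (D x : ℝ)) := by
      have hsub := (integral_sub hp1 hp2).symm.trans hzero
      exact sub_eq_zero.mp hsub
    have hGi : ∀ i, G i = ∫ x, (D x : ℝ) * gradVec ψ x i := by
      intro i
      rw [hEG]
      have := (ContinuousLinearMap.proj (R := ℝ) (φ := fun _ : Fin d => ℝ) i).integral_comp_comm h1
      simpa using this.symm
    have hMi : ∀ i, Mv i = ∫ x, (D x : ℝ) * (ψ x * x i) := by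
      intro i
      rw [hEM]
      have := (ContinuousLinearMap.proj (R := ℝ) (φ := fun _ : Fin d => ℝ) i).integral_comp_comm h2
      simpa [mul_assoc] using this.symm
    calc v ⬝ᵥ G = ∑ i, v i * G i := rfl
      _ = ∑ i, ∫ x, v i * ((D x : ℝ) * gradVec ψ x i) := by
          refine Finset.sum_congr rfl fun i _ => ?_
          rw [hGi i, integral_const_mul]
      _ = ∫ x, ∑ i, v i * ((D x : ℝ) * gradVec ψ x i) :=
          (integral_finset_sum _ fun i _ => (hcomp1 i).const_mul (v i)).symm
      _ = ∫ x, fderiv ℝ ψ x v * (D x : ℝ) := by rw [← he1]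
      _ = ∫ x, ψ x * ((v ⬝ᵥ S⁻¹.mulVec x) * (D x : ℝ)) := hsplit
      _ = ∫ x, ∑ i, w i * ((D x : ℝ) * (ψ x * x i)) := by rw [← he2]
      _ = ∑ i, ∫ x, w i * ((D x : ℝ) * (ψ x * x i)) :=
          integral_finset_sum _ fun i _ => (hcomp2 i).const_mul (w i)
      _ = ∑ i, w i * Mv i := by
          refine Finset.sum_congr rfl fun i _ => ?_
          rw [hMi i, integral_const_mul]
      _ = w ⬝ᵥ Mv := rfl
      _ = v ⬝ᵥ S⁻¹.mulVec Mv := (hvdot Mv).symm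

  -- membership of K in I
  have hKmem : K ∈ I := by
    rw [hI]
    set L := (WithLp.linearEquiv 2 ℝ (Fin d → ℝ)).symm with hL
    have hkey' : ∀ v : Fin d → ℝ, T.mulVec v = 0 → K ⬝ᵥ v = 0 := by
      intro v hv
      have h1 := hkey v hv
      have h2 : v ⬝ᵥ (G - S⁻¹ *ᵥ Mv) = 0 := by
        rw [dotProduct_sub, h1, sub_self]
      rw [dotProduct_comm] at h2
      exact h2
    -- move to EuclideanSpace
    set J : Submodule ℝ (EuclideanSpace ℝ (Fin d)) :=
      Submodule.span ℝ (⇑L '' Set.range T) with hJ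
    have hLK : L K ∈ J := by
      have : J = Jᗮᗮ := (Submodule.orthogonal_orthogonal J).symm
      rw [this, Submodule.mem_orthogonal]
      intro u hu
      have hu' : ∀ i : Fin m, T.mulVec ((WithLp.linearEquiv 2 ℝ (Fin d → ℝ)) u) = 0 → True := fun _ _ => trivial
      -- u is orthogonal to each row of T
      have hrow : ∀ i : Fin m, (inner ℝ (L (T i)) u : ℝ) = 0 := by
        intro i
        exact (Submodule.mem_orthogonal J u).mp hu (L (T i))
          (Submodule.subset_span ⟨T i, Set.mem_range_self i, rfl⟩)
      set u' : Fin d → ℝ := (WithLp.linearEquiv 2 ℝ (Fin d → ℝ)) u with hu'def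
      have hTu : T.mulVec u' = 0 := by
        funext i
        have := hrow i
        rw [PiLp.inner_apply] at this
        simp only [Matrix.mulVec, dotProduct, Pi.zero_apply]
        rw [← this]
        refine Finset.sum_congr rfl fun k _ => ?_
        simp only [RCLike.inner_apply, starRingEnd_apply, star_trivial]
        exact mul_comm _ _
      have hKu : K ⬝ᵥ u' = 0 := hkey' u' hTu
      have hKu2 : u' ⬝ᵥ K = 0 := by rwa [dotProduct_comm] at hKu
      rw [PiLp.inner_apply]
      simp only [RCLike.inner_apply, starRingEnd_apply, star_trivial]
      exact hKu
    -- transfer back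
    have himg : Submodule.span ℝ (⇑L '' Set.range T) =
        Submodule.map (L : (Fin d → ℝ) →ₗ[ℝ] EuclideanSpace ℝ (Fin d))
          (Submodule.span ℝ (Set.range T)) := by
      rw [Submodule.map_span]
      congr 1
    rw [hJ, himg] at hLK
    obtain ⟨y, hy, hyK⟩ := hLK
    have : y = K := by
      have := congrArg (WithLp.linearEquiv 2 ℝ (Fin d → ℝ)) hyK
      exact this
    rwa [← this]
  refine ⟨⟨K, hKmem, ?_⟩, fun h0 => ?_⟩
  · have heq : G - K = S⁻¹.mulVec Mv := by rw [hK]; abel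
    rw [heq]
  · have : K = G := by rw [hK, h0, Matrix.mulVec_zero, sub_zero]
    rwa [← this]
end

section
/- Under the model ρ(x) = φ_{0,Σ}(x) q(Tx) with E[X] = 0, for any continuously differentiable ψ : ℝ^d → ℝ (with ∇ψ(X) and Xψ(X) integrable), the vector β(ψ) := E[∇ψ(X)] satisfies ‖(I − Π*) β(ψ)‖₂ ≤ ‖Σ⁻¹ ∫ x ψ(x) ρ(x) dx‖₂, where I is the d-dimensional identity matrix and Π* is the orthogonal projector onto 𝓘. -/
open MeasureTheory Matrix

lemma div_zero_dir {d : ℕ} (f g : (Fin d → ℝ) → ℝ) (v : Fin d → ℝ) (hv : v ≠ 0)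
    (hderiv : ∀ x : Fin d → ℝ, ∀ t : ℝ, HasDerivAt (fun s : ℝ => f (x + s • v)) (g (x + t • v)) t)
    (hf : Integrable f) (hg : Integrable g) : ∫ x, g x = 0 := by
  obtain ⟨i₀, hi₀⟩ : ∃ i, v i ≠ 0 := by
    by_contra h; push_neg at h; exact hv (funext fun i => h i)
  cases d with
  | zero => exact absurd (Subsingleton.elim v 0) hv
  | succ n =>
  classical
  set e : Fin (n+1) → ℝ := Pi.single i₀ 1 with he
  set L : ((Fin (n+1) → ℝ) →ₗ[ℝ] (Fin (n+1) → ℝ)) :=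
    LinearMap.id + (LinearMap.proj i₀).smulRight (v - e) with hL
  set M : ((Fin (n+1) → ℝ) →ₗ[ℝ] (Fin (n+1) → ℝ)) :=
    LinearMap.id + ((v i₀)⁻¹ • (LinearMap.proj (R := ℝ) (φ := fun _ : Fin (n+1) => ℝ) i₀)).smulRight (e - v) with hM
  have hLapp : ∀ x j, L x j = x j + x i₀ * (v j - e j) := by
    intro x j
    simp [hL, LinearMap.smulRight_apply]
  have hMapp : ∀ x j, M x j = x j + (v i₀)⁻¹ * x i₀ * (e j - v j) := by
    intro x j
    simp [hM, LinearMap.smulRight_apply]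
  have hei₀ : e i₀ = 1 := Pi.single_eq_same i₀ 1
  have hML : M.comp L = LinearMap.id := by
    apply LinearMap.ext; intro x; funext j
    have h1 := hMapp (L x) j
    rw [hLapp x j, hLapp x i₀, hei₀] at h1
    simp only [LinearMap.comp_apply, LinearMap.id_apply]
    rw [h1]; field_simp; ring
  have hLM : L.comp M = LinearMap.id := by
    apply LinearMap.ext; intro x; funext j
    have h1 := hLapp (M x) j
    rw [hMapp x j, hMapp x i₀, hei₀] at h1
    simp only [LinearMap.comp_apply, LinearMap.id_apply]
    rw [h1]; field_simp; ring
  set Leq : ((Fin (n+1) → ℝ) ≃ₗ[ℝ] (Fin (n+1) → ℝ)) := LinearEquiv.ofLinear L M hLM hML with hLeq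
  have hdetML : LinearMap.det M * LinearMap.det L = 1 := by
    rw [← LinearMap.det_comp, hML, LinearMap.det_id]
  have hdet : LinearMap.det L ≠ 0 := right_ne_zero_of_mul_eq_one hdetML
  have hmapL : Measure.map L volume =
      ENNReal.ofReal |( LinearMap.det L)⁻¹| • volume :=
    Real.map_linearMap_volume_pi_eq_smul_volume_pi hdet
  have hLeqcoe : (Leq : (Fin (n+1) → ℝ) → (Fin (n+1) → ℝ)) = L := rfl
  have hemb : MeasurableEmbedding (L : (Fin (n+1) → ℝ) → (Fin (n+1) → ℝ)) := by
    rw [← hLeqcoe]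
    exact Leq.toContinuousLinearEquiv.toHomeomorph.measurableEmbedding
  have hgL : Integrable (g ∘ L) volume := by
    rw [← hemb.integrable_map_iff, hmapL]
    exact hg.smul_measure ENNReal.ofReal_ne_top
  have hfL : Integrable (f ∘ L) volume := by
    rw [← hemb.integrable_map_iff, hmapL]
    exact hf.smul_measure ENNReal.ofReal_ne_top
  have hint : ENNReal.ofReal |(LinearMap.det L)⁻¹| • volume = Measure.map L volume := hmapL.symm
  have key : ∫ x, g (L x) = 0 := by
    set E := MeasurableEquiv.piFinSuccAbove (fun _ : Fin (n+1) => ℝ) i₀ with hE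
    have hEp : MeasurePreserving E := volume_preserving_piFinSuccAbove _ i₀
    have hEs : MeasurePreserving E.symm := hEp.symm
    have hsymm : ∀ (t : ℝ) (w : Fin n → ℝ), E.symm (t, w) = Fin.insertNth i₀ t w := by
      intro t w; rfl
    have hLe : L e = v := by
      funext j
      rw [hLapp e j, hei₀]
      ring
    have hins : ∀ (t : ℝ) (w : Fin n → ℝ),
        Fin.insertNth i₀ t w = Fin.insertNth i₀ 0 w + t • e := by
      intro t w
      funext j
      by_cases hj : j = i₀
      · subst hj
        simp [Fin.insertNth_apply_same, he]
      · obtain ⟨k, rfl⟩ := Fin.exists_succAbove_eq (Ne.symm (Ne.symm hj))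
        have hne : i₀.succAbove k ≠ i₀ := Fin.succAbove_ne i₀ k
        simp [Fin.insertNth_apply_succAbove, he, Pi.single_eq_of_ne hne]
    have hline : ∀ (t : ℝ) (w : Fin n → ℝ),
        L (Fin.insertNth i₀ t w) = L (Fin.insertNth i₀ 0 w) + t • v := by
      intro t w
      rw [hins, L.map_add, L.map_smul, hLe]
    have hgint : Integrable (fun z : ℝ × (Fin n → ℝ) => g (L (E.symm z))) (volume.prod volume) :=
      (hEs.integrable_comp_emb E.symm.measurableEmbedding).mpr hgL
    have hfint : Integrable (fun z : ℝ × (Fin n → ℝ) => f (L (E.symm z))) (volume.prod volume) :=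
      (hEs.integrable_comp_emb E.symm.measurableEmbedding).mpr hfL
    have h1 : ∫ x, g (L x) = ∫ z : ℝ × (Fin n → ℝ), g (L (E.symm z)) ∂(volume.prod volume) :=
      (hEs.integral_comp E.symm.measurableEmbedding (fun x => g (L x))).symm
    rw [h1, integral_prod_symm _ hgint]
    have hae : ∀ᵐ w ∂(volume : Measure (Fin n → ℝ)),
        (∫ t : ℝ, g (L (E.symm (t, w)))) = 0 := by
      filter_upwards [hgint.prod_left_ae, hfint.prod_left_ae] with w hgw hfw
      have heqg : (fun t : ℝ => g (L (E.symm (t, w))))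
          = fun t : ℝ => g (L (Fin.insertNth i₀ 0 w) + t • v) := by
        funext t; rw [hsymm, hline]
      have heqf : (fun t : ℝ => f (L (E.symm (t, w))))
          = fun t : ℝ => f (L (Fin.insertNth i₀ 0 w) + t • v) := by
        funext t; rw [hsymm, hline]
      have hgw' : Integrable (fun t : ℝ => g (L (Fin.insertNth i₀ 0 w) + t • v)) := by
        rw [← heqg]; exact hgw
      have hfw' : Integrable (fun t : ℝ => f (L (Fin.insertNth i₀ 0 w) + t • v)) := by
        rw [← heqf]; exact hfw
      have h0 : (∫ t : ℝ, g (L (E.symm (t, w))))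
          = ∫ t : ℝ, g (L (Fin.insertNth i₀ 0 w) + t • v) := by
        exact congrArg (integral volume) heqg
      rw [h0]
      exact integral_eq_zero_of_hasDerivAt_of_integrable
        (fun t => hderiv (L (Fin.insertNth i₀ 0 w)) t) hgw' hfw'
    rw [integral_congr_ae hae]
    simp
  have : |(LinearMap.det L)⁻¹| • ∫ x, g x = 0 := by
    rw [← ENNReal.toReal_ofReal (abs_nonneg (LinearMap.det L)⁻¹), ← integral_smul_measure,
      hint, hemb.integral_map]
    exact key
  have habs : |(LinearMap.det L)⁻¹| ≠ 0 := by
    simp [abs_eq_zero, inv_eq_zero, hdet]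
  rcases smul_eq_zero.mp this with h | h
  · exact absurd h habs
  · exact h

open Matrix

lemma grad_dot {d : ℕ} (ψ : (Fin d → ℝ) → ℝ) (y v : Fin d → ℝ) :
    v ⬝ᵥ gradVec ψ y = fderiv ℝ ψ y v := by
  have hv : v = ∑ i, v i • (Pi.single i (1:ℝ) : Fin d → ℝ) := by
    funext j
    rw [Finset.sum_apply]
    simp [Pi.single_apply]
  conv_rhs => rw [hv]
  rw [map_sum]
  unfold gradVec dotProduct
  congr 1; funext i
  rw [(fderiv ℝ ψ y).map_smul]
  simp

lemma dot_symm_swap {d : ℕ} (A : Matrix (Fin d) (Fin d) ℝ) (hA : Aᵀ = A)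
    (x y : Fin d → ℝ) : (A.mulVec x) ⬝ᵥ y = x ⬝ᵥ A.mulVec y := by
  rw [dotProduct_mulVec, ← mulVec_transpose, hA, dotProduct_comm]

lemma quad_line {d : ℕ} (A : Matrix (Fin d) (Fin d) ℝ) (hA : Aᵀ = A)
    (x v : Fin d → ℝ) (t : ℝ) :
    HasDerivAt (fun s : ℝ => (x + s • v) ⬝ᵥ A.mulVec (x + s • v))
      (2 * ((x + t • v) ⬝ᵥ A.mulVec v)) t := by
  have hexp : (fun s : ℝ => (x + s • v) ⬝ᵥ A.mulVec (x + s • v))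
      = fun s : ℝ => (x ⬝ᵥ A.mulVec x) + s * (2 * (x ⬝ᵥ A.mulVec v))
        + s^2 * (v ⬝ᵥ A.mulVec v) := by
    funext s
    have hswap : (A.mulVec x) ⬝ᵥ v = x ⬝ᵥ A.mulVec v := dot_symm_swap A hA x v
    have h1 : v ⬝ᵥ A.mulVec x = x ⬝ᵥ A.mulVec v := by
      rw [dotProduct_comm]; exact hswap
    rw [mulVec_add, mulVec_smul]
    simp only [dotProduct_add, add_dotProduct, smul_dotProduct, dotProduct_smul,
      smul_eq_mul, h1]
    ring
  rw [hexp]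
  have h := (((hasDerivAt_id t).mul_const (2 * (x ⬝ᵥ A.mulVec v))).const_add
    (x ⬝ᵥ A.mulVec x)).add
    (((hasDerivAt_pow 2 t)).mul_const (v ⬝ᵥ A.mulVec v))
  refine h.congr_deriv ?_
  rw [add_dotProduct, smul_dotProduct]
  simp only [smul_eq_mul]
  push_cast
  ring

lemma gauss_line {d : ℕ} (S : Matrix (Fin d) (Fin d) ℝ) (hA : S⁻¹ᵀ = S⁻¹)
    (x v : Fin d → ℝ) (t : ℝ) :
    HasDerivAt (fun s : ℝ => gaussDensity S (x + s • v))
      (gaussDensity S (x + t • v) * (-((x + t • v) ⬝ᵥ S⁻¹.mulVec v))) t := by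
  unfold gaussDensity
  set C := (2 * Real.pi) ^ (-(d : ℝ) / 2) * S.det ^ (-(1 : ℝ) / 2) with hC
  have hQ := quad_line S⁻¹ hA x v t
  have hexp : HasDerivAt (fun s : ℝ => Real.exp (-((x + s • v) ⬝ᵥ S⁻¹.mulVec (x + s • v)) / 2))
      (Real.exp (-((x + t • v) ⬝ᵥ S⁻¹.mulVec (x + t • v)) / 2)
        * (-(2 * ((x + t • v) ⬝ᵥ S⁻¹.mulVec v)) / 2)) t := by
    exact (hQ.neg.div_const 2).exp
  have h := hexp.const_mul C
  refine h.congr_deriv ?_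
  ring

lemma psi_line {d : ℕ} (ψ : (Fin d → ℝ) → ℝ) (hψ : ContDiff ℝ 1 ψ)
    (x v : Fin d → ℝ) (t : ℝ) :
    HasDerivAt (fun s : ℝ => ψ (x + s • v)) (v ⬝ᵥ gradVec ψ (x + t • v)) t := by
  have hline : HasDerivAt (fun s : ℝ => x + s • v) v t := by
    have h1 : HasDerivAt (fun s : ℝ => s • v) ((1:ℝ) • v) t :=
      (hasDerivAt_id t).smul_const v
    simpa using h1.const_add x
  have hF : HasFDerivAt ψ (fderiv ℝ ψ (x + t • v)) (x + t • v) :=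
    (hψ.differentiable one_ne_zero (x + t • v)).hasFDerivAt
  have := hF.comp_hasDerivAt t hline
  rw [grad_dot]
  exact this

open scoped ENNReal NNReal

lemma stein {d m : ℕ} {Ω : Type*} [MeasurableSpace Ω]
    (μ : Measure Ω) [IsProbabilityMeasure μ]
    (X : Ω → Fin d → ℝ) (hX : Measurable X)
    (S : Matrix (Fin d) (Fin d) ℝ) (hS : S.PosDef)
    (T : Matrix (Fin m) (Fin d) ℝ)
    (q : (Fin m → ℝ) → ℝ) (hq : Continuous q)
    (hdens : Measure.map X μ = volume.withDensity
      (fun x => ENNReal.ofReal (gaussDensity S x * q (T.mulVec x))))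
    (ψ : (Fin d → ℝ) → ℝ) (hψ : ContDiff ℝ 1 ψ)
    (hint1 : Integrable (fun ω => gradVec ψ (X ω)) μ)
    (hint2 : Integrable (fun ω => ψ (X ω) • X ω) μ)
    (v : Fin d → ℝ) (hTv : T.mulVec v = 0) :
    v ⬝ᵥ (∫ ω, gradVec ψ (X ω) ∂μ) = (S⁻¹.mulVec v) ⬝ᵥ (∫ ω, ψ (X ω) • X ω ∂μ) := by
  rcases eq_or_ne v 0 with rfl | hv
  · rw [zero_dotProduct, mulVec_zero, zero_dotProduct]
  classical
  set ρ : (Fin d → ℝ) → ℝ := fun x => gaussDensity S x * q (T.mulVec x) with hρ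
  set fdens : (Fin d → ℝ) → ℝ≥0 := fun x => Real.toNNReal (ρ x) with hfdens
  set dens : (Fin d → ℝ) → ℝ := fun x => ((fdens x : ℝ)) with hdensdef
  have hgc : Continuous (gaussDensity S) := by
    unfold gaussDensity
    have h1 : Continuous fun x : Fin d → ℝ => x ⬝ᵥ S⁻¹.mulVec x :=
      continuous_id.dotProduct (continuous_const.matrix_mulVec continuous_id)
    exact continuous_const.mul (Real.continuous_exp.comp (h1.neg.div_const 2))
  have hρm : Measurable ρ :=
    (hgc.mul (hq.comp (continuous_const.matrix_mulVec continuous_id))).measurable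
  have hfdm : Measurable fdens := hρm.real_toNNReal
  have hdm : Measurable dens := measurable_coe_nnreal_real.comp hfdm
  have hwd : (fun x => ENNReal.ofReal (gaussDensity S x * q (T.mulVec x)))
      = fun x => ((fdens x : ℝ≥0∞)) := rfl
  have hdens' : Measure.map X μ = volume.withDensity (fun x => ((fdens x : ℝ≥0∞))) := by
    rw [hdens, hwd]
  have transfer_int : ∀ h : (Fin d → ℝ) → ℝ, Measurable h →
      Integrable (fun ω => h (X ω)) μ → Integrable (fun x => h x * dens x) volume := by
    intro h hm hi
    have h1 : Integrable h (Measure.map X μ) :=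
      (integrable_map_measure hm.aestronglyMeasurable hX.aemeasurable).mpr hi
    rw [hdens'] at h1
    have h2 := (integrable_withDensity_iff_integrable_smul hfdm).mp h1
    have : (fun x => fdens x • h x) = fun x => h x * dens x := by
      funext x; simp [hdensdef, NNReal.smul_def, mul_comm]
    rwa [this] at h2
  have transfer_eq : ∀ h : (Fin d → ℝ) → ℝ, Measurable h →
      Integrable (fun ω => h (X ω)) μ → ∫ ω, h (X ω) ∂μ = ∫ x, h x * dens x := by
    intro h hm hi
    rw [← integral_map hX.aemeasurable hm.aestronglyMeasurable, hdens',
      integral_withDensity_eq_integral_smul hfdm h]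
    congr 1; funext x; simp [hdensdef, NNReal.smul_def, mul_comm]
  have hψc : Continuous ψ := hψ.continuous
  have hmgrad : ∀ i, Measurable fun x : Fin d → ℝ => gradVec ψ x i :=
    fun i => measurable_fderiv_apply_const ℝ (f := ψ) ((Pi.single i 1 : Fin d → ℝ))
  have hint1i : ∀ i, Integrable (fun ω => gradVec ψ (X ω) i) μ := fun i =>
    (ContinuousLinearMap.proj (R := ℝ) (φ := fun _ : Fin d => ℝ) i).integrable_comp hint1
  have hint2i : ∀ i, Integrable (fun ω => ψ (X ω) * X ω i) μ := fun i =>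
    (ContinuousLinearMap.proj (R := ℝ) (φ := fun _ : Fin d => ℝ) i).integrable_comp hint2
  set w : Fin d → ℝ := S⁻¹.mulVec v with hw
  have hm₁ : Measurable fun x : Fin d → ℝ => v ⬝ᵥ gradVec ψ x := by
    unfold dotProduct
    exact Finset.measurable_sum _ fun i _ => ((hmgrad i).const_mul (v i))
  have hi₁ : Integrable (fun ω => v ⬝ᵥ gradVec ψ (X ω)) μ := by
    unfold dotProduct
    exact integrable_finset_sum _ fun i _ => ((hint1i i).const_mul (v i))
  have hm₂ : Measurable fun x : Fin d → ℝ => w ⬝ᵥ (ψ x • x) := by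
    unfold dotProduct
    refine Finset.measurable_sum _ fun i _ => ?_
    exact ((hψc.measurable.mul (measurable_pi_apply i)).const_mul (w i))
  have hi₂ : Integrable (fun ω => w ⬝ᵥ (ψ (X ω) • X ω)) μ := by
    unfold dotProduct
    exact integrable_finset_sum _ fun i _ => ((hint2i i).const_mul (w i))
  have hβ : ∫ ω, v ⬝ᵥ gradVec ψ (X ω) ∂μ = v ⬝ᵥ (∫ ω, gradVec ψ (X ω) ∂μ) := by
    unfold dotProduct
    rw [integral_finset_sum _ (fun i _ => ((hint1i i).const_mul (v i)))]
    refine Finset.sum_congr rfl fun i _ => ?_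
    rw [integral_const_mul]
    congr 1
    exact (ContinuousLinearMap.proj (R := ℝ) (φ := fun _ : Fin d => ℝ) i).integral_comp_comm hint1
  have hwint : ∫ ω, w ⬝ᵥ (ψ (X ω) • X ω) ∂μ = w ⬝ᵥ (∫ ω, ψ (X ω) • X ω ∂μ) := by
    unfold dotProduct
    rw [integral_finset_sum _ (fun i (_ : i ∈ Finset.univ) =>
      (show Integrable (fun ω => w i * (ψ (X ω) • X ω) i) μ from (hint2i i).const_mul (w i)))]
    refine Finset.sum_congr rfl fun i _ => ?_
    rw [integral_const_mul]
    congr 1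
    exact (ContinuousLinearMap.proj (R := ℝ) (φ := fun _ : Fin d => ℝ) i).integral_comp_comm hint2
  have hgpos : ∀ x, 0 < gaussDensity S x := by
    intro x
    unfold gaussDensity
    have h2π : (0:ℝ) < 2 * Real.pi := by positivity
    have hdet : (0:ℝ) < S.det := hS.det_pos
    positivity
  have hdens_eq : ∀ x, dens x = gaussDensity S x * max (q (T.mulVec x)) 0 := by
    intro x
    rw [hdensdef]
    simp only [hfdens, Real.coe_toNNReal', hρ]
    rcases le_total (q (T.mulVec x)) 0 with h0 | h0
    · rw [max_eq_right (mul_nonpos_of_nonneg_of_nonpos (hgpos x).le h0),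
        max_eq_right h0, mul_zero]
    · rw [max_eq_left (mul_nonneg (hgpos x).le h0), max_eq_left h0]
  have hdnn : ∀ x, 0 ≤ dens x := fun x => NNReal.coe_nonneg _
  have hTline : ∀ (x : Fin d → ℝ) (s : ℝ), T.mulVec (x + s • v) = T.mulVec x := by
    intro x s
    rw [mulVec_add, mulVec_smul, hTv]
    simp
  have hA : S⁻¹ᵀ = S⁻¹ := by
    have h := hS.1.inv
    simpa [Matrix.IsHermitian, Matrix.conjTranspose_eq_transpose_of_trivial] using h
  set f : (Fin d → ℝ) → ℝ := fun x => ψ x * dens x with hf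
  set g : (Fin d → ℝ) → ℝ :=
    fun x => (v ⬝ᵥ gradVec ψ x - ψ x * (x ⬝ᵥ S⁻¹.mulVec v)) * dens x with hg
  have hψdot : ∀ x : Fin d → ℝ, w ⬝ᵥ (ψ x • x) = ψ x * (x ⬝ᵥ w) := by
    intro x
    rw [dotProduct_smul, smul_eq_mul, dotProduct_comm]
  have hderiv : ∀ (x : Fin d → ℝ) (t : ℝ),
      HasDerivAt (fun s : ℝ => f (x + s • v)) (g (x + t • v)) t := by
    intro x t
    have hfun : (fun s : ℝ => f (x + s • v))
        = fun s : ℝ => (ψ (x + s • v) * gaussDensity S (x + s • v))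
            * max (q (T.mulVec x)) 0 := by
      funext s
      rw [hf]
      simp only
      rw [hdens_eq, hTline]
      ring
    rw [hfun]
    have h := ((psi_line ψ hψ x v t).mul (gauss_line S hA x v t)).mul_const
      (max (q (T.mulVec x)) 0)
    refine h.congr_deriv ?_
    rw [hg]
    simp only
    rw [hdens_eq (x + t • v), hTline x t]
    ring
  have e1 : Integrable (fun x => (v ⬝ᵥ gradVec ψ x) * dens x) volume :=
    transfer_int _ hm₁ hi₁
  have e2 : Integrable (fun x => (w ⬝ᵥ (ψ x • x)) * dens x) volume :=
    transfer_int _ hm₂ hi₂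
  have hgeq : g = fun x => (v ⬝ᵥ gradVec ψ x) * dens x - (w ⬝ᵥ (ψ x • x)) * dens x := by
    funext x
    rw [hg]
    simp only
    rw [hψdot x, hw]
    ring
  have hgint : Integrable g volume := by
    rw [hgeq]; exact e1.sub e2
  have hdint : Integrable dens volume := by
    have hprob : IsProbabilityMeasure (Measure.map X μ) :=
      Measure.isProbabilityMeasure_map hX.aemeasurable
    rw [hdens'] at hprob
    have huniv := hprob.measure_univ
    rw [withDensity_apply _ MeasurableSet.univ, Measure.restrict_univ] at huniv
    have hne : ∫⁻ x, ((fdens x : ℝ≥0∞)) ≠ ⊤ := by rw [huniv]; exact ENNReal.one_ne_top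
    have := integrable_toReal_of_lintegral_ne_top
      (hfdm.coe_nnreal_ennreal.aemeasurable) hne
    simpa [hdensdef] using this
  obtain ⟨M, hMb⟩ := (isCompact_closedBall (0 : Fin d → ℝ) 1).exists_bound_of_continuousOn
    hψc.continuousOn
  set M' := max M 0 with hM'
  have eψx : ∀ i, Integrable (fun x => (ψ x * x i) * dens x) volume := fun i =>
    transfer_int _ (hψc.measurable.mul (measurable_pi_apply i)) (hint2i i)
  have hmaj : Integrable (fun x => M' * dens x + ∑ i, |ψ x * x i * dens x|) volume :=
    (hdint.const_mul M').add (integrable_finset_sum _ fun i _ => (eψx i).abs)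
  have hfb : ∀ x, ‖f x‖ ≤ M' * dens x + ∑ i, |ψ x * x i * dens x| := by
    intro x
    have hsumnn : (0:ℝ) ≤ ∑ i, |ψ x * x i * dens x| :=
      Finset.sum_nonneg fun i _ => abs_nonneg _
    have hnormf : ‖f x‖ = |ψ x| * dens x := by
      rw [hf]
      simp only
      rw [Real.norm_eq_abs, abs_mul, abs_of_nonneg (hdnn x)]
    by_cases hx : x ∈ Metric.closedBall (0 : Fin d → ℝ) 1
    · have h1 : |ψ x| ≤ M' := le_trans (by simpa [Real.norm_eq_abs] using hMb x hx)
        (le_max_left _ _)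
      rw [hnormf]
      calc |ψ x| * dens x ≤ M' * dens x := mul_le_mul_of_nonneg_right h1 (hdnn x)
        _ ≤ _ := le_add_of_nonneg_right hsumnn
    · have hxn : 1 < ‖x‖ := by
        simp only [Metric.mem_closedBall, dist_zero_right, not_le] at hx
        exact hx
      obtain ⟨i, hi⟩ : ∃ i, 1 < |x i| := by
        by_contra hcon
        push_neg at hcon
        have : ‖x‖ ≤ 1 := pi_norm_le_iff_of_nonneg zero_le_one |>.mpr
          (fun i => by rw [Real.norm_eq_abs]; exact hcon i)
        linarith
      have h2 : |ψ x| * dens x ≤ |ψ x * x i * dens x| := by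
        rw [abs_mul, abs_mul, abs_of_nonneg (hdnn x)]
        have : |ψ x| * 1 ≤ |ψ x| * |x i| :=
          mul_le_mul_of_nonneg_left hi.le (abs_nonneg _)
        nlinarith [abs_nonneg (ψ x), hdnn x]
      have h3 : |ψ x * x i * dens x| ≤ ∑ j, |ψ x * x j * dens x| :=
        Finset.single_le_sum (f := fun j => |ψ x * x j * dens x|) (fun j _ => abs_nonneg _) (Finset.mem_univ i)
      have hM'd : 0 ≤ M' * dens x :=
        mul_nonneg (le_max_right M 0) (hdnn x)
      rw [hnormf]
      linarith
  have hfint : Integrable f volume :=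
    Integrable.mono' hmaj ((hψc.measurable.mul hdm).aestronglyMeasurable)
      (Filter.Eventually.of_forall hfb)
  have hzero : ∫ x, g x = 0 := div_zero_dir f g v hv hderiv hfint hgint
  rw [hgeq] at hzero
  rw [integral_sub e1 e2] at hzero
  have t1 := transfer_eq _ hm₁ hi₁
  have t2 := transfer_eq _ hm₂ hi₂
  rw [← t1, ← t2] at hzero
  rw [← hβ, ← hwint]
  linarith

/-- under the model ρ(x) = φ_{0,Σ}(x) q(Tx) with E X = 0, for any
C¹ function ψ, the vector β(ψ) = E[∇ψ(X)] satisfies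
‖(I − Π*)β(ψ)‖₂ ≤ ‖Σ⁻¹ ∫ x ψ(x) ρ(x) dx‖₂, where Π* is the orthogonal
projector onto 𝓘 = span(rows of T). -/
theorem stmt1 {d m : ℕ} {Ω : Type*} [MeasurableSpace Ω]
    (μ : Measure Ω) [IsProbabilityMeasure μ]
    (X : Ω → Fin d → ℝ) (hX : Measurable X)
    (S : Matrix (Fin d) (Fin d) ℝ) (hS : S.PosDef)
    (T : Matrix (Fin m) (Fin d) ℝ)
    (q : (Fin m → ℝ) → ℝ) (hq : ContDiff ℝ (⊤ : ℕ∞) q)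
    (hdens : Measure.map X μ = volume.withDensity
      (fun x => ENNReal.ofReal (gaussDensity S x * q (T.mulVec x))))
    (hmean : ∫ ω, X ω ∂μ = 0)
    (ψ : (Fin d → ℝ) → ℝ) (hψ : ContDiff ℝ 1 ψ)
    (hint1 : Integrable (fun ω => gradVec ψ (X ω)) μ)
    (hint2 : Integrable (fun ω => ψ (X ω) • X ω) μ)
    (I : Submodule ℝ (Fin d → ℝ)) (hI : I = Submodule.span ℝ (Set.range T))
    (Pstar : Matrix (Fin d) (Fin d) ℝ)
    (hPs : Pstar.IsSymm) (hP2 : Pstar * Pstar = Pstar)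
    (hPrange : LinearMap.range Pstar.mulVecLin = I) :
    euclNorm ((1 - Pstar).mulVec (∫ ω, gradVec ψ (X ω) ∂μ)) ≤
      euclNorm (S⁻¹.mulVec (∫ ω, ψ (X ω) • X ω ∂μ)) := by
  classical
  set β := ∫ ω, gradVec ψ (X ω) ∂μ with hβ
  set w0 := ∫ ω, ψ (X ω) • X ω ∂μ with hw0
  set u := (1 - Pstar).mulVec β with hu
  set wh := S⁻¹.mulVec w0 with hwh
  have hone : (1 - Pstar)ᵀ = 1 - Pstar := by
    rw [Matrix.transpose_sub, Matrix.transpose_one, hPs.eq]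
  have hPsub : Pstar * (1 - Pstar) = 0 := by
    rw [Matrix.mul_sub, Matrix.mul_one, hP2, sub_self]
  have hsubsub : (1 - Pstar) * (1 - Pstar) = 1 - Pstar := by
    rw [Matrix.sub_mul, Matrix.one_mul, hPsub, sub_zero]
  have hTu : T.mulVec u = 0 := by
    funext i
    have hmem : T i ∈ LinearMap.range Pstar.mulVecLin := by
      rw [hPrange, hI]
      exact Submodule.subset_span ⟨i, rfl⟩
    obtain ⟨y, hy⟩ := hmem
    have h1 : T.mulVec u i = T i ⬝ᵥ u := rfl
    rw [h1, ← hy]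
    have h2 : Pstar.mulVecLin y = Pstar.mulVec y := rfl
    rw [h2, dot_symm_swap Pstar hPs.eq y u, hu, mulVec_mulVec, hPsub, zero_mulVec,
      dotProduct_zero]
    rfl
  have hSA : S⁻¹ᵀ = S⁻¹ := by
    have h := hS.1.inv
    simpa [Matrix.IsHermitian, Matrix.conjTranspose_eq_transpose_of_trivial] using h
  have hstein := stein μ X hX S hS T q hq.continuous hdens ψ hψ hint1 hint2 u hTu
  have hswap : (S⁻¹.mulVec u) ⬝ᵥ w0 = u ⬝ᵥ wh := dot_symm_swap S⁻¹ hSA u w0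
  have huu : u ⬝ᵥ u = u ⬝ᵥ β := by
    conv_lhs => rw [hu]
    rw [dot_symm_swap (1 - Pstar) hone β u, hu, mulVec_mulVec, hsubsub, ← hu,
      dotProduct_comm]
  have hkey : u ⬝ᵥ u = u ⬝ᵥ wh := by
    rw [huu, ← hβ] at *
    rw [huu]
    rw [hstein, hswap]
  set A := ∑ i, u i ^ 2 with hA
  set B := ∑ i, wh i ^ 2 with hB
  have hAu : u ⬝ᵥ u = A := by
    simp [dotProduct, hA, sq]
  have hCS : (u ⬝ᵥ wh) ^ 2 ≤ A * B := by
    simpa [dotProduct, hA, hB] using Finset.sum_mul_sq_le_sq_mul_sq Finset.univ u wh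
  have hA0 : 0 ≤ A := Finset.sum_nonneg fun i _ => sq_nonneg _
  have hB0 : 0 ≤ B := Finset.sum_nonneg fun i _ => sq_nonneg _
  have hkA : A = u ⬝ᵥ wh := by rw [← hAu, hkey]
  have hAB : A ≤ B := by nlinarith [hCS, hA0, hB0, hkA]
  unfold euclNorm
  exact Real.sqrt_le_sqrt hAB
end

section
/- Let β̂_1, …, β̂_J ∈ ℝ^d satisfy ‖β̂_j − β_j‖₂ ≤ ϱ for some β_j in a linear subspace 𝓘 ⊆ ℝ^d, and let 𝓢 be the convex hull of the points {±β̂_j}_{j=1}^J. Let B be a symmetric positive-definite matrix such that the ellipsoid 𝓔₁(B) = {x ∈ ℝ^d : xᵀBx ≤ 1} is inscribed in 𝓢 (i.e. 𝓔₁(B) ⊆ 𝓢). Then for any unit vector v orthogonal to 𝓘 it holds vᵀB⁻¹v ≤ ϱ². -/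
open Matrix

/-!
A unit vector `v ⊥ 𝓘` sees each `β̂_j` only through `β̂_j - β_j`, so by Cauchy–Schwarz the
linear functional `⟪v, ·⟫` is bounded by `ϱ` in absolute value on the points `±β̂_j`, hence by `ϱ`
on their convex hull `𝓢` and on the inscribed ellipsoid `𝓔₁(B)`. The maximum of `⟪v, ·⟫` on
`𝓔₁(B)` is `√(vᵀB⁻¹v)`, attained at `B⁻¹v / √(vᵀB⁻¹v)`.
-/

theorem abs_dotProduct_le_euclNorm_mul_euclNorm {d : ℕ} (v w : Fin d → ℝ) :
    |v ⬝ᵥ w| ≤ euclNorm v * euclNorm w := by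
  rw [euclNorm, euclNorm, ← Real.sqrt_mul (Finset.sum_nonneg fun i _ => sq_nonneg (v i))]
  exact Real.abs_le_sqrt (Finset.sum_mul_sq_le_sq_mul_sq _ _ _)

theorem convexHull_symm_subset_halfSpace {𝕜 E ι : Type*} [Field 𝕜] [LinearOrder 𝕜]
    [IsStrictOrderedRing 𝕜] [AddCommGroup E] [Module 𝕜 E] (f : E →ₗ[𝕜] 𝕜) {p : ι → E} {c : 𝕜}
    (h : ∀ j, |f (p j)| ≤ c) :
    convexHull 𝕜 {y | ∃ j, y = p j ∨ y = -p j} ⊆ {y | f y ≤ c} := by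
  refine convexHull_min ?_ (convex_halfSpace_le f.isLinear c)
  rintro _ ⟨j, rfl | rfl⟩
  · exact le_of_abs_le (h j)
  · simpa using neg_le.1 (neg_le_of_abs_le (h j))

theorem dotProduct_inv_mulVec_le_sq_of_ellipsoid_le {n : Type*} [Fintype n] [DecidableEq n]
    (B : Matrix n n ℝ) (v : n → ℝ) {c : ℝ} (h : ∀ x, x ⬝ᵥ B *ᵥ x ≤ 1 → v ⬝ᵥ x ≤ c) :
    v ⬝ᵥ B⁻¹ *ᵥ v ≤ c ^ 2 := by
  set q := v ⬝ᵥ B⁻¹ *ᵥ v with hq_def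
  rcases le_or_gt q 0 with hq | hq
  · exact hq.trans (sq_nonneg c)
  have hB : IsUnit B.det := by
    by_contra hB
    simp [q, nonsing_inv_apply_not_isUnit B hB] at hq
  set t := √q
  have ht : 0 < t := Real.sqrt_pos.2 hq
  have ht2 : t ^ 2 = q := Real.sq_sqrt hq.le
  have hBx : B *ᵥ (t⁻¹ • B⁻¹ *ᵥ v) = t⁻¹ • v := by
    rw [mulVec_smul, mulVec_mulVec, mul_nonsing_inv B hB, one_mulVec]
  have hvx : v ⬝ᵥ (t⁻¹ • B⁻¹ *ᵥ v) = t := by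
    rw [dotProduct_smul, smul_eq_mul, ← hq_def, ← ht2, sq, inv_mul_cancel_left₀ ht.ne']
  have hx_mem : (t⁻¹ • B⁻¹ *ᵥ v) ⬝ᵥ B *ᵥ (t⁻¹ • B⁻¹ *ᵥ v) ≤ 1 := by
    rw [hBx, dotProduct_smul, dotProduct_comm, hvx, smul_eq_mul, inv_mul_cancel₀ ht.ne']
  rw [← ht2]
  exact pow_le_pow_left₀ ht.le (hvx ▸ h _ hx_mem) 2

theorem stmt3_general {d J : ℕ} (ϱ : ℝ)
    (I : Submodule ℝ (Fin d → ℝ))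
    (βhat β : Fin J → Fin d → ℝ)
    (hβ : ∀ j, β j ∈ I) (hclose : ∀ j, euclNorm (βhat j - β j) ≤ ϱ)
    (B : Matrix (Fin d) (Fin d) ℝ)
    (hincl : {x : Fin d → ℝ | x ⬝ᵥ B.mulVec x ≤ 1} ⊆
      convexHull ℝ {y : Fin d → ℝ | ∃ j, y = βhat j ∨ y = -βhat j}) :
    ∀ v : Fin d → ℝ, euclNorm v = 1 → (∀ w ∈ I, v ⬝ᵥ w = 0) →
      v ⬝ᵥ B⁻¹.mulVec v ≤ ϱ ^ 2 := by
  intro v hv hvI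
  have hβhat : ∀ j, |dotProductBilin ℝ ℝ v (βhat j)| ≤ ϱ := fun j =>
    calc |v ⬝ᵥ βhat j| = |v ⬝ᵥ (βhat j - β j)| := by rw [dotProduct_sub, hvI _ (hβ j), sub_zero]
      _ ≤ euclNorm v * euclNorm (βhat j - β j) := abs_dotProduct_le_euclNorm_mul_euclNorm _ _
      _ ≤ ϱ := by rw [hv, one_mul]; exact hclose j
  exact dotProduct_inv_mulVec_le_sq_of_ellipsoid_le B v fun x hx =>
    convexHull_symm_subset_halfSpace _ hβhat (hincl hx)

/-- if the β̂_j are ϱ-close to points β_j of a subspace 𝓘 and the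
ellipsoid 𝓔₁(B) is inscribed in the convex hull 𝓢 of {±β̂_j}, then for every
unit vector v orthogonal to 𝓘 one has vᵀB⁻¹v ≤ ϱ². -/
theorem stmt3 {d J : ℕ} (hJ : 0 < J) (ϱ : ℝ)
    (I : Submodule ℝ (Fin d → ℝ))
    (βhat β : Fin J → Fin d → ℝ)
    (hβ : ∀ j, β j ∈ I) (hclose : ∀ j, euclNorm (βhat j - β j) ≤ ϱ)
    (B : Matrix (Fin d) (Fin d) ℝ) (hB : B.PosDef)
    (hincl : {x : Fin d → ℝ | x ⬝ᵥ B.mulVec x ≤ 1} ⊆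
      convexHull ℝ {y : Fin d → ℝ | ∃ j, y = βhat j ∨ y = -βhat j}) :
    ∀ v : Fin d → ℝ, euclNorm v = 1 → (∀ w ∈ I, v ⬝ᵥ w = 0) →
      v ⬝ᵥ B⁻¹.mulVec v ≤ ϱ ^ 2 :=
  stmt3_general ϱ I βhat β hβ hclose B hincl
end
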